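/- Let Λ be a free abelian group of finite rank and E ⊆ Λ. Define L(E) = {X ∈ Pos(Λ) : E ⊆ X ∩ (−X)} and let Λ(E) = Λ ∩ span_ℚ(E). Then L(E) = {X ∈ Pos(Λ) : Λ(E) ⊆ X}, and L(E) is closed in the topology on Pos(Λ). -/

import Mathlib

open Pointwise
open scoped TensorProduct

def IsPositiveSubset {Λ : Type*} [AddCommGroup Λ] (X : Set Λ) : Prop :=
  X ∪ (-X) = Set.univ ∧ X + X ⊆ X ∧ ∃ H : AddSubgroup Λ, (H : Set Λ) = X ∩ (-X)

open Topology

/-!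
Since `ℚ ⊗[ℤ] Λ` is the localization of `Λ` at the nonzero integers, every `l ∈ Λ(E)` has a
nonzero multiple `n • l` in the subgroup generated by `E`. A positive set `X` is closed under
addition, so if `n • l ∈ X` with `n > 0` then `l ∈ X`; hence a subgroup inside `X ∩ (-X)` brings
its saturation into `X`. For closedness, `L(E)` is the intersection over `e ∈ E` of the sets
`{X | e ∈ X}` and `{X | -e ∈ X}`, whose complements are basic open sets.
-/

theorem IsLocalizedModule.exists_smul_mem_span_of_apply_mem_span {R S M N : Type*}
    [CommSemiring R] [CommSemiring S] [AddCommMonoid M] [AddCommMonoid N] [Module R M]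
    [Module R N] [Algebra R S] [Module S N] [IsScalarTower R S N] (p : Submonoid R)
    [IsLocalization p S] (f : M →ₗ[R] N) [IsLocalizedModule p f] {s : Set M} {m : M}
    (h : f m ∈ Submodule.span S (f '' s)) : ∃ c : p, c • m ∈ Submodule.span R s := by
  rw [← Submodule.localized'_span S p f] at h
  obtain ⟨m', hm', c, hc⟩ := h
  rw [IsLocalizedModule.mk'_eq_iff, ← LinearMap.map_smul_of_tower] at hc
  obtain ⟨d, hd⟩ := IsLocalizedModule.exists_of_eq (S := p) hc
  exact ⟨d * c, by rw [mul_smul, ← hd]; exact Submodule.smul_of_tower_mem _ d hm'⟩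

section Saturation

variable {Λ : Type*} [AddCommGroup Λ]

def rationalSaturation (E : Set Λ) : Submodule ℤ Λ :=
  ((Submodule.span ℚ (TensorProduct.mk ℤ ℚ Λ 1 '' E)).restrictScalars ℤ).comap
    (TensorProduct.mk ℤ ℚ Λ 1)

theorem coe_rationalSaturation (E : Set Λ) :
    (rationalSaturation E : Set Λ) = {l : Λ | ((1 : ℚ) ⊗ₜ[ℤ] l : ℚ ⊗[ℤ] Λ) ∈
        Submodule.span ℚ ((fun x : Λ => ((1 : ℚ) ⊗ₜ[ℤ] x : ℚ ⊗[ℤ] Λ)) '' E)} :=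
  rfl

theorem subset_rationalSaturation (E : Set Λ) : E ⊆ rationalSaturation E :=
  fun e he => Submodule.subset_span ⟨e, he, rfl⟩

theorem exists_zsmul_mem_span_of_mem_rationalSaturation {E : Set Λ} {l : Λ}
    (hl : l ∈ rationalSaturation E) : ∃ n : ℤ, n ≠ 0 ∧ n • l ∈ Submodule.span ℤ E := by
  obtain ⟨c, hc⟩ := IsLocalizedModule.exists_smul_mem_span_of_apply_mem_span
    (nonZeroDivisors ℤ) (TensorProduct.mk ℤ ℚ Λ 1) hl
  exact ⟨c, nonZeroDivisors.coe_ne_zero c, hc⟩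

end Saturation

namespace IsPositiveSubset

variable {Λ : Type*} [AddCommGroup Λ] {X : Set Λ}

theorem mem_or_neg_mem (hX : IsPositiveSubset X) (x : Λ) : x ∈ X ∨ -x ∈ X := by
  simpa using hX.1.ge (Set.mem_univ x)

theorem zero_mem (hX : IsPositiveSubset X) : (0 : Λ) ∈ X := by
  obtain ⟨H, hH⟩ := hX.2.2
  exact (hH ▸ H.zero_mem : (0 : Λ) ∈ X ∩ -X).1

def toAddSubmonoid (hX : IsPositiveSubset X) : AddSubmonoid Λ where
  carrier := X
  add_mem' ha hb := hX.2.1 (Set.add_mem_add ha hb)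
  zero_mem' := hX.zero_mem

theorem nsmul_mem (hX : IsPositiveSubset X) {x : Λ} (hx : x ∈ X) (n : ℕ) : n • x ∈ X :=
  hX.toAddSubmonoid.nsmul_mem hx n

theorem mem_of_nsmul_mem (hX : IsPositiveSubset X) {n : ℕ} (hn : n ≠ 0) {x : Λ}
    (h : n • x ∈ X) : x ∈ X := by
  obtain ⟨k, rfl⟩ := Nat.exists_eq_succ_of_ne_zero hn
  refine (hX.mem_or_neg_mem x).elim id fun hnx => ?_
  -- `x = (k + 1) • x + k • (-x)`
  have := hX.2.1 (Set.add_mem_add h (hX.nsmul_mem hnx k))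
  rwa [smul_neg, succ_nsmul', add_neg_cancel_right] at this

theorem mem_of_zsmul_mem_inter_neg (hX : IsPositiveSubset X) {n : ℤ} (hn : n ≠ 0) {x : Λ}
    (h : n • x ∈ X ∩ -X) : x ∈ X := by
  refine hX.mem_of_nsmul_mem (Int.natAbs_ne_zero.mpr hn) ?_
  rcases Int.natAbs_eq n with hn' | hn' <;> rw [hn'] at h
  · simpa only [natCast_zsmul] using h.1
  · simpa only [neg_smul, natCast_zsmul, Set.mem_neg, neg_neg] using h.2

theorem span_int_subset_inter_neg (hX : IsPositiveSubset X) {E : Set Λ} (hE : E ⊆ X ∩ -X) :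
    (Submodule.span ℤ E : Set Λ) ⊆ X ∩ -X := by
  obtain ⟨H, hH⟩ := hX.2.2
  rw [← hH] at hE ⊢
  exact Submodule.span_le (p := H.toIntSubmodule) |>.mpr hE

theorem subset_inter_neg_iff_rationalSaturation_subset (hX : IsPositiveSubset X) {E : Set Λ} :
    E ⊆ X ∩ -X ↔ (rationalSaturation E : Set Λ) ⊆ X := by
  refine ⟨fun hE l hl => ?_, fun h e he => ⟨h ?_, Set.mem_neg.mpr (h ?_)⟩⟩
  · obtain ⟨n, hn, hnl⟩ := exists_zsmul_mem_span_of_mem_rationalSaturation hl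
    exact hX.mem_of_zsmul_mem_inter_neg hn (hX.span_int_subset_inter_neg hE hnl)
  · exact subset_rationalSaturation E he
  · exact neg_mem (subset_rationalSaturation E he)

theorem isClosed_setOf_mem (t : TopologicalSpace {X : Set Λ // IsPositiveSubset X})
    (ht : ∀ O : Set {X : Set Λ // IsPositiveSubset X},
      (∀ X ∈ O, ∃ E' : Finset Λ, ((X : Set Λ) ∩ (E' : Set Λ) = ∅) ∧
        {Y : {X : Set Λ // IsPositiveSubset X} | (Y : Set Λ) ∩ (E' : Set Λ) = ∅} ⊆ O) →
      IsOpen[t] O)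
    (x : Λ) : IsClosed[t] {Y : {X : Set Λ // IsPositiveSubset X} | x ∈ (Y : Set Λ)} := by
  refine ⟨ht _ fun X hX => ⟨{x}, ?_, fun Y hY => ?_⟩⟩
  · simpa using hX
  · simpa using hY

end IsPositiveSubset

theorem rational_subspace_closed_general {Λ : Type*} [AddCommGroup Λ]
    (t : TopologicalSpace {X : Set Λ // IsPositiveSubset X})
    (ht : ∀ O : Set {X : Set Λ // IsPositiveSubset X},
      @IsOpen _ t O ↔ ∀ X ∈ O, ∃ E' : Finset Λ,
        ((X : Set Λ) ∩ (E' : Set Λ) = ∅) ∧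
        {Y : {X : Set Λ // IsPositiveSubset X} | (Y : Set Λ) ∩ (E' : Set Λ) = ∅} ⊆ O)
    (E : Set Λ)
    -- `Λ(E) = Λ ∩ span_ℚ(E)`, computed inside `ℚ ⊗_ℤ Λ`
    (ΛE : Set Λ)
    (hΛE : ΛE = {l : Λ | ((1 : ℚ) ⊗ₜ[ℤ] l : ℚ ⊗[ℤ] Λ) ∈
        Submodule.span ℚ ((fun x : Λ => ((1 : ℚ) ⊗ₜ[ℤ] x : ℚ ⊗[ℤ] Λ)) '' E)}) :
    {X : Set Λ | IsPositiveSubset X ∧ E ⊆ X ∩ (-X)} =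
      {X : Set Λ | IsPositiveSubset X ∧ ΛE ⊆ X} ∧
    @IsClosed _ t
      {X : {X : Set Λ // IsPositiveSubset X} | E ⊆ (X : Set Λ) ∩ (-(X : Set Λ))} := by
  rw [← coe_rationalSaturation] at hΛE
  subst hΛE
  refine ⟨Set.ext fun X => and_congr_right fun hX =>
    hX.subset_inter_neg_iff_rationalSaturation_subset, ?_⟩
  have hclosed := IsPositiveSubset.isClosed_setOf_mem t fun O => (ht O).mpr
  have hL : {X : {X : Set Λ // IsPositiveSubset X} | E ⊆ (X : Set Λ) ∩ (-(X : Set Λ))} =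
      ⋂ e ∈ E, {Y : {X : Set Λ // IsPositiveSubset X} | e ∈ (Y : Set Λ)} ∩
        {Y | -e ∈ (Y : Set Λ)} := by
    ext X
    simp [Set.subset_def, forall_and]
  rw [hL]
  exact @isClosed_biInter _ _ t _ _ fun e _ => (hclosed e).inter (hclosed (-e))

theorem rational_subspace_closed {Λ : Type*} [AddCommGroup Λ]
    [Module.Free ℤ Λ] [Module.Finite ℤ Λ]
    (t : TopologicalSpace {X : Set Λ // IsPositiveSubset X})
    (ht : ∀ O : Set {X : Set Λ // IsPositiveSubset X},
      @IsOpen _ t O ↔ ∀ X ∈ O, ∃ E' : Finset Λ,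
        ((X : Set Λ) ∩ (E' : Set Λ) = ∅) ∧
        {Y : {X : Set Λ // IsPositiveSubset X} | (Y : Set Λ) ∩ (E' : Set Λ) = ∅} ⊆ O)
    (E : Set Λ)
    -- `Λ(E) = Λ ∩ span_ℚ(E)`, computed inside `ℚ ⊗_ℤ Λ`
    (ΛE : Set Λ)
    (hΛE : ΛE = {l : Λ | ((1 : ℚ) ⊗ₜ[ℤ] l : ℚ ⊗[ℤ] Λ) ∈
        Submodule.span ℚ ((fun x : Λ => ((1 : ℚ) ⊗ₜ[ℤ] x : ℚ ⊗[ℤ] Λ)) '' E)}) :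
    {X : Set Λ | IsPositiveSubset X ∧ E ⊆ X ∩ (-X)} =
      {X : Set Λ | IsPositiveSubset X ∧ ΛE ⊆ X} ∧
    @IsClosed _ t
      {X : {X : Set Λ // IsPositiveSubset X} | E ⊆ (X : Set Λ) ∩ (-(X : Set Λ))} :=
  rational_subspace_closed_general t ht E ΛE hΛE
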